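/- arXiv:1411.4643 — 2 statements merged into one kernel-verified Lean document; each statement's English description precedes it below -/
import Mathlib

section
/- In the algebra A_n^m, suppose the nilpotent basis vectors multiply trivially: I_s I_p = 0 for all s,p ∈ {m+1,...,n}. Then for ζ = x e_1 + y e_2 + z e_3 and t ∈ ℂ with t ≠ ξ_u for all u ≤ m, the resolvent has the closed form (t e_1 − ζ)^{-1} = Σ_{u=1}^m I_u/(t − ξ_u) + Σ_{s=m+1}^n T_s I_s/(t − ξ_{u_s})², where T_s = y a_s + z b_s. -/
/-!
Write `t e₁ - ζ = D - N` with `D = Σ_u (t - ξ_u) I_u` and `N = Σ_s T_s I_s`. Since the `I_u`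
are orthogonal idempotents summing to `1`, `D` is invertible with inverse
`D' = Σ_u (t - ξ_u)⁻¹ I_u`, and `N² = 0` because the radical multiplies trivially. Hence
`(D - N)⁻¹ = D' + D'² N`, and `D'² N = Σ_s T_s I_s / (t - ξ_{u_s})²` because `I_u I_s = I_s`
exactly when `u = u_s`.
-/

open Finset

section OrthogonalSums

variable {ι R A : Type*} [CommSemiring R] [Semiring A] [Algebra R A]

lemma sum_smul_mul_sum_smul_of_orthogonal [DecidableEq ι] {F : Finset ι} {e : ι → A}
    (he : ∀ r ∈ F, ∀ s ∈ F, e r * e s = if r = s then e r else 0) (c d : ι → R) :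
    (∑ r ∈ F, c r • e r) * (∑ s ∈ F, d s • e s) = ∑ r ∈ F, (c r * d r) • e r := by
  rw [sum_mul_sum]
  refine sum_congr rfl fun r hr => ?_
  rw [sum_congr rfl fun s hs => by rw [smul_mul_smul_comm, he r hr s hs, smul_ite, smul_zero]]
  simp [hr]

lemma sum_smul_mul_sum_smul_of_mul_eq_ite [DecidableEq ι] {F G : Finset ι} {e : ι → A}
    {u : ι → ι} (hu : ∀ s ∈ G, u s ∈ F)
    (he : ∀ s ∈ G, ∀ r ∈ F, e r * e s = if r = u s then e s else 0) (c d : ι → R) :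
    (∑ r ∈ F, c r • e r) * (∑ s ∈ G, d s • e s) = ∑ s ∈ G, (c (u s) * d s) • e s := by
  rw [sum_mul_sum, sum_comm]
  refine sum_congr rfl fun s hs => ?_
  rw [sum_congr rfl fun r hr => by rw [smul_mul_smul_comm, he s hs r hr, smul_ite, smul_zero]]
  simp [hu s hs]

lemma sum_smul_mul_sum_smul_eq_zero {G : Finset ι} {e : ι → A}
    (he : ∀ s ∈ G, ∀ p ∈ G, e s * e p = 0) (c d : ι → R) :
    (∑ s ∈ G, c s • e s) * (∑ p ∈ G, d p • e p) = 0 := by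
  rw [sum_mul_sum]
  exact sum_eq_zero fun s hs => sum_eq_zero fun p hp => by
    rw [smul_mul_smul_comm, he s hs p hp, smul_zero]

end OrthogonalSums

lemma algebraMap_sub_sum_smul_eq {ι K A : Type*} [Fintype ι] [Field K] [Ring A] [Algebra K A]
    (p : ι → Prop) [DecidablePred p] {e : ι → A} (hone : ∑ r ∈ univ.filter p, e r = 1)
    (t : K) (c : ι → K) :
    algebraMap K A t - ∑ r, c r • e r
      = ∑ r ∈ univ.filter p, (t - c r) • e r - ∑ r ∈ univ.filter (fun r => ¬ p r), c r • e r := by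
  rw [Algebra.algebraMap_eq_smul_one, ← hone, ← sum_filter_add_sum_filter_not univ p, smul_sum]
  simp only [sub_smul, sum_sub_distrib]
  abel

lemma sub_mul_add_mul_mul_eq_one {R : Type*} [CommRing R] {d d' N : R} (hd : d * d' = 1)
    (hN : N * N = 0) : (d - N) * (d' + d' * (d' * N)) = 1 := by
  linear_combination (1 + d' * N) * hd - d' ^ 2 * hN

lemma isUnit_and_inverse_eq_of_mul_eq_one {M₀ : Type*} [CommMonoidWithZero M₀] {a b : M₀}
    (h : a * b = 1) : IsUnit a ∧ Ring.inverse a = b := by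
  have ha : IsUnit a := .of_mul_eq_one b h
  exact ⟨ha, by simpa [h] using Ring.inverse_mul_cancel_left a b ha⟩

theorem resolvent_closed_form_general (n m : ℕ) (A : Type*)
    [CommRing A] [Algebra ℂ A]
    (I : Module.Basis (Fin n) ℂ A)
    (hidem : ∀ r s : Fin n, r.val < m → s.val < m →
      I r * I s = if r = s then I r else 0)
    (u : Fin n → Fin n)
    (hu : ∀ s : Fin n, m ≤ s.val → (u s).val < m)
    (hmul3 : ∀ s : Fin n, m ≤ s.val → ∀ r : Fin n, r.val < m →
      I r * I s = if r = u s then I s else 0)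
    -- trivial multiplication on the radical
    (hrad : ∀ s p : Fin n, m ≤ s.val → m ≤ p.val → I s * I p = 0)
    (hone : ∑ w ∈ Finset.univ.filter (fun w : Fin n => w.val < m), I w = 1)
    (a b : Fin n → ℂ) (x y z : ℝ) (e₂ e₃ ζ : A)
    (he₂ : e₂ = ∑ r, a r • I r) (he₃ : e₃ = ∑ r, b r • I r)
    (hζ : ζ = (x : ℂ) • (1 : A) + (y : ℂ) • e₂ + (z : ℂ) • e₃)
    (ξ : Fin n → ℂ) (hξ : ∀ w, ξ w = (x : ℂ) + (y : ℂ) * a w + (z : ℂ) * b w)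
    (T : Fin n → ℂ) (hT : ∀ p, T p = (y : ℂ) * a p + (z : ℂ) * b p)
    (t : ℂ) (ht : ∀ w : Fin n, w.val < m → t ≠ ξ w) :
    IsUnit (algebraMap ℂ A t - ζ)
      ∧ Ring.inverse (algebraMap ℂ A t - ζ)
        = (∑ w ∈ Finset.univ.filter (fun w : Fin n => w.val < m), (t - ξ w)⁻¹ • I w)
          + ∑ s ∈ Finset.univ.filter (fun s : Fin n => m ≤ s.val),
              (T s / (t - ξ (u s)) ^ 2) • I s := by
  set F := univ.filter (fun w : Fin n => w.val < m)
  set G := univ.filter (fun s : Fin n => m ≤ s.val)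
  have hF : ∀ {w}, w ∈ F ↔ w.val < m := by simp [F]
  have hG : ∀ {s}, s ∈ G ↔ m ≤ s.val := by simp [G]
  have hζT : ζ = algebraMap ℂ A x + ∑ r, T r • I r := by
    simp only [hζ, he₂, he₃, hT, Algebra.algebraMap_eq_smul_one, smul_sum, smul_smul, add_smul,
      sum_add_distrib, add_assoc]
  have hM : algebraMap ℂ A t - ζ
      = ∑ w ∈ F, (t - ξ w) • I w - ∑ s ∈ G, T s • I s := by
    have hGF : G = univ.filter (fun s : Fin n => ¬ s.val < m) := by simp only [G, not_lt]
    rw [hζT, sub_add_eq_sub_sub, ← map_sub, algebraMap_sub_sum_smul_eq _ hone, ← hGF]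
    congr 1
    exact sum_congr rfl fun w _ => by rw [hξ, hT]; congr 1; ring
  have hD : (∑ w ∈ F, (t - ξ w) • I w) * ∑ w ∈ F, (t - ξ w)⁻¹ • I w = 1 := by
    rw [sum_smul_mul_sum_smul_of_orthogonal fun r hr s hs => hidem r s (hF.1 hr) (hF.1 hs),
      ← hone]
    exact sum_congr rfl fun w hw => by
      rw [mul_inv_cancel₀ (sub_ne_zero.2 (ht w (hF.1 hw))), one_smul]
  have hN : (∑ s ∈ G, T s • I s) * ∑ s ∈ G, T s • I s = 0 :=
    sum_smul_mul_sum_smul_eq_zero (fun s hs p hp => hrad s p (hG.1 hs) (hG.1 hp)) T T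
  have hinv_mul := sum_smul_mul_sum_smul_of_mul_eq_ite (R := ℂ)
    (fun s hs => hF.2 (hu s (hG.1 hs)))
    (fun s hs r hr => hmul3 s (hG.1 hs) r (hF.1 hr)) (fun w => (t - ξ w)⁻¹)
  rw [hM]
  convert isUnit_and_inverse_eq_of_mul_eq_one (sub_mul_add_mul_mul_eq_one hD hN) using 3
  rw [hinv_mul, hinv_mul]
  exact sum_congr rfl fun s _ => by rw [div_eq_mul_inv, ← inv_pow]; congr 1; ring

/-- When the nilpotent basis vectors multiply trivially, the resolvent has the
closed form
`(t e₁ − ζ)⁻¹ = Σ_{u=1}^m I_u/(t − ξ_u) + Σ_{s=m+1}^n T_s I_s/(t − ξ_{u_s})²`. -/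
theorem resolvent_closed_form (n m : ℕ) (hm : m ≤ n) (A : Type*)
    [CommRing A] [Algebra ℂ A]
    (I : Module.Basis (Fin n) ℂ A)
    (hidem : ∀ r s : Fin n, r.val < m → s.val < m →
      I r * I s = if r = s then I r else 0)
    (u : Fin n → Fin n)
    (hu : ∀ s : Fin n, m ≤ s.val → (u s).val < m)
    (hmul3 : ∀ s : Fin n, m ≤ s.val → ∀ r : Fin n, r.val < m →
      I r * I s = if r = u s then I s else 0)
    -- trivial multiplication on the radical
    (hrad : ∀ s p : Fin n, m ≤ s.val → m ≤ p.val → I s * I p = 0)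
    (hone : ∑ w ∈ Finset.univ.filter (fun w : Fin n => w.val < m), I w = 1)
    (a b : Fin n → ℂ) (x y z : ℝ) (e₂ e₃ ζ : A)
    (he₂ : e₂ = ∑ r, a r • I r) (he₃ : e₃ = ∑ r, b r • I r)
    (hζ : ζ = (x : ℂ) • (1 : A) + (y : ℂ) • e₂ + (z : ℂ) • e₃)
    (ξ : Fin n → ℂ) (hξ : ∀ w, ξ w = (x : ℂ) + (y : ℂ) * a w + (z : ℂ) * b w)
    (T : Fin n → ℂ) (hT : ∀ p, T p = (y : ℂ) * a p + (z : ℂ) * b p)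
    (t : ℂ) (ht : ∀ w : Fin n, w.val < m → t ≠ ξ w) :
    IsUnit (algebraMap ℂ A t - ζ)
      ∧ Ring.inverse (algebraMap ℂ A t - ζ)
        = (∑ w ∈ Finset.univ.filter (fun w : Fin n => w.val < m), (t - ξ w)⁻¹ • I w)
          + ∑ s ∈ Finset.univ.filter (fun s : Fin n => m ≤ s.val),
              (T s / (t - ξ (u s)) ^ 2) • I s :=
  resolvent_closed_form_general n m A I hidem u hu hmul3 hrad hone a b x y z e₂ e₃ ζ he₂ he₃ hζ ξ hξ
    T hT t ht
end

section
/- Let Φ : Ω_ζ → A_n^m be monogenic in a domain Ω_ζ where Ω ⊂ ℝ³ is convex in the direction of the straight line L_u, and suppose a_u ∉ ℝ or b_u ∉ ℝ. If ζ_1, ζ_2 ∈ Ω_ζ satisfy ζ_2 − ζ_1 ∈ {x e_1 + y e_2 + z e_3 : (x,y,z) ∈ L_u} (equivalently f_u(ζ_1) = f_u(ζ_2)), then Φ(ζ_1) − Φ(ζ_2) ∈ 𝓘_u, the maximal ideal span{I_k : k ≠ u}. Consequently the assignment F_u(ξ_u) := f_u(Φ(ζ)) for any ζ with f_u(ζ)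 = ξ_u is a well-defined function on D_u. -/
/-!
The coordinate `f_u = I.coord w` is a character of the algebra: the multiplication table of a
Cartan basis makes it multiplicative on basis elements, hence everywhere. For `ζ₂ - ζ₁` in the
direction of `L_u` the Gateaux derivative of `Φ` along that direction is `(ζ₂ - ζ₁) Φ'(ζ)`, which
`f_u` kills; so `f_u ∘ Φ` has zero one-sided derivative along the segment `[ζ₁, ζ₂] ⊆ Ω_ζ` and is
constant there by the mean value inequality.
-/

open Filter Set Topology

theorem eq_of_right_dir_deriv_zero_on_segment {E F : Type*} [NormedAddCommGroup E]
    [NormedSpace ℝ E] [NormedAddCommGroup F] [NormedSpace ℝ F] {g : E → F} {p q : E}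
    (hcont : ContinuousOn g (segment ℝ p q))
    (hderiv : ∀ x ∈ segment ℝ p q,
      Tendsto (fun ε : ℝ => ε⁻¹ • (g (x + ε • (q - p)) - g x)) (𝓝[>] 0) (𝓝 0)) :
    g q = g p := by
  set γ : ℝ → E := fun t => AffineMap.lineMap p q t
  have hγ : MapsTo γ (Icc 0 1) (segment ℝ p q) := by
    rw [segment_eq_image_lineMap]
    exact mapsTo_image _ _
  have hshift (t s : ℝ) : γ s = γ t + (s - t) • (q - p) := by
    simp only [γ, AffineMap.lineMap_apply_module']
    module
  have hderiv_right : ∀ t ∈ Ico (0 : ℝ) 1, HasDerivWithinAt (g ∘ γ) 0 (Ici t) t := by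
    intro t ht
    have h0 : HasDerivWithinAt (fun ε : ℝ => g (γ t + ε • (q - p))) 0 (Ioi 0) 0 := by
      rw [hasDerivWithinAt_iff_tendsto_slope' self_notMem_Ioi]
      refine (hderiv (γ t) (hγ ⟨ht.1, ht.2.le⟩)).congr fun ε => ?_
      simp [slope_def_module]
    rw [← hasDerivWithinAt_Ioi_iff_Ici]
    have := h0.scomp_of_eq t ((hasDerivWithinAt_id t (Ioi t)).sub_const t)
      (fun s hs => sub_pos.2 (show t < s from hs)) (sub_self t).symm
    simpa [Function.comp_def, ← hshift] using this
  simpa [γ] using constant_of_has_deriv_right_zero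
    (hcont.comp AffineMap.lineMap_continuous.continuousOn hγ) hderiv_right 1
    (right_mem_Icc.2 zero_le_one)

theorem LinearMap.map_mul_of_map_mul_basis {K A ι : Type*} [CommSemiring K] [Semiring A]
    [Algebra K A] (b : Module.Basis ι K A) (f : A →ₗ[K] K)
    (h : ∀ i j, f (b i * b j) = f (b i) * f (b j)) (x y : A) :
    f (x * y) = f x * f y :=
  LinearMap.congr_fun₂ (LinearMap.ext_basis (B := (LinearMap.mul K A).compr₂ f)
    (B' := (LinearMap.mul K K).compl₁₂ f f) b b h) x y

namespace Module.Basis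

variable {K A ι : Type*} [CommSemiring K]

theorem mem_span_image_ne_iff_coord_eq_zero [AddCommMonoid A] [Module K A]
    (b : Basis ι K A) {w : ι} {x : A} :
    x ∈ Submodule.span K (b '' {k | k ≠ w}) ↔ b.coord w x = 0 := by
  rw [b.mem_span_image]
  simp [Set.subset_def, not_imp_comm]

theorem coord_one_of_sum_eq_one [Semiring A] [Module K A] (b : Basis ι K A) {s : Finset ι}
    (hone : ∑ k ∈ s, b k = 1) {w : ι} (hw : w ∈ s) : b.coord w 1 = 1 := by
  classical
  rw [← hone, map_sum]
  simp [b.coord_apply, Finsupp.single_apply, hw]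

variable [CommSemiring A] [Algebra K A] {n m : ℕ} (I : Basis (Fin n) K A) {w : Fin n}

theorem coord_apply_eq_zero_of_le (hw : w.val < m) {k : Fin n} (hk : m ≤ k.val) :
    I.coord w (I k) = 0 := by
  rw [I.coord_apply, I.repr_self, Finsupp.single_eq_of_ne]
  omega

theorem coord_mul_of_cartan
    (hidem : ∀ r s : Fin n, r.val < m → s.val < m → I r * I s = if r = s then I r else 0)
    (Υ : Fin n → Fin n → Fin n → K)
    (hnil : ∀ r s : Fin n, m ≤ r.val → m ≤ s.val →
      I r * I s = ∑ k ∈ Finset.univ.filter (fun k : Fin n => max r.val s.val < k.val),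
        Υ r s k • I k)
    (u : Fin n → Fin n)
    (hmul3 : ∀ s : Fin n, m ≤ s.val → ∀ r : Fin n, r.val < m →
      I r * I s = if r = u s then I s else 0)
    (hw : w.val < m) (r s : Fin n) :
    I.coord w (I r * I s) = I.coord w (I r) * I.coord w (I s) := by
  have hrad {k : Fin n} (hk : m ≤ k.val) := I.coord_apply_eq_zero_of_le hw hk
  rcases lt_or_ge r.val m with hr | hr <;> rcases lt_or_ge s.val m with hs | hs
  · rw [hidem r s hr hs]
    split_ifs with hrs
    · subst hrs
      simp only [I.coord_apply, I.repr_self, Finsupp.single_apply]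
      split_ifs <;> simp
    · simp only [map_zero, I.coord_apply, I.repr_self, Finsupp.single_apply]
      split_ifs <;> simp_all
  · rw [hmul3 s hs r hr, hrad hs, mul_zero]
    split_ifs <;> simp [hrad hs]
  · rw [mul_comm (I r), hmul3 r hr s hs, hrad hr, zero_mul]
    split_ifs <;> simp [hrad hr]
  · rw [hnil r s hr hs, hrad hr, zero_mul, map_sum]
    refine Finset.sum_eq_zero fun k hk => ?_
    rw [map_smul, hrad (hr.trans ((le_max_left _ _).trans (Finset.mem_filter.1 hk).2.le)),
      smul_zero]

end Module.Basis

theorem difference_in_maximal_ideal_general (n m : ℕ) (A : Type*)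
    [NormedCommRing A] [NormedAlgebra ℂ A]
    (I : Module.Basis (Fin n) ℂ A)
    (hidem : ∀ r s : Fin n, r.val < m → s.val < m →
      I r * I s = if r = s then I r else 0)
    (Υ : Fin n → Fin n → Fin n → ℂ)
    (hnil : ∀ r s : Fin n, m ≤ r.val → m ≤ s.val →
      I r * I s = ∑ k ∈ Finset.univ.filter (fun k : Fin n => max r.val s.val < k.val),
        Υ r s k • I k)
    (u : Fin n → Fin n)
    (hmul3 : ∀ s : Fin n, m ≤ s.val → ∀ r : Fin n, r.val < m →
      I r * I s = if r = u s then I s else 0)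
    (hone : ∑ w ∈ Finset.univ.filter (fun w : Fin n => w.val < m), I w = 1)
    (a b : Fin n → ℂ) (e₂ e₃ : A)
    (he₂ : e₂ = ∑ r, a r • I r) (he₃ : e₃ = ∑ r, b r • I r)
    (w : Fin n) (hw : w.val < m)
    (Ω : Set (ℝ × ℝ × ℝ))
    (ξ : Fin n → (ℝ × ℝ × ℝ) → ℂ)
    (hξ : ∀ v p, ξ v p = (p.1 : ℂ) + (p.2.1 : ℂ) * a v + (p.2.2 : ℂ) * b v)
    -- `Ω` is convex in the direction of the line `L_u = ker (ξ_u)`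
    (hconv : ∀ p ∈ Ω, ∀ q ∈ Ω, ξ w q = ξ w p → segment ℝ p q ⊆ Ω)
    -- `Φ` is monogenic in `Ω_ζ`
    (φ : ℝ × ℝ × ℝ → A)
    (hcont : ContinuousOn φ Ω)
    (hmono : ∀ p ∈ Ω, ∃ D : A, ∀ h₁ h₂ h₃ : ℝ,
      Tendsto (fun ε : ℝ => ε⁻¹ • (φ (p + ε • (h₁, h₂, h₃)) - φ p))
        (nhdsWithin 0 (Ioi 0))
        (nhds ((h₁ • (1 : A) + h₂ • e₂ + h₃ • e₃) * D))) :
    ∀ p ∈ Ω, ∀ q ∈ Ω, ξ w p = ξ w q →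
      (φ p - φ q ∈ Submodule.span ℂ (I '' {k : Fin n | k ≠ w})
        ∧ I.coord w (φ p) = I.coord w (φ q)) := by
  intro p hp q hq hpq
  have : FiniteDimensional ℂ A := .of_basis I
  set f := I.coord w
  have hf_cont : Continuous f := f.continuous_of_finiteDimensional
  have hf_mul := f.map_mul_of_map_mul_basis I (I.coord_mul_of_cartan hidem Υ hnil u hmul3 hw)
  have hf_one : f 1 = 1 := I.coord_one_of_sum_eq_one hone (by simpa using hw)
  have hf_e₂ : f e₂ = a w := by rw [he₂, I.coord_apply, I.repr_sum_self]
  have hf_e₃ : f e₃ = b w := by rw [he₃, I.coord_apply, I.repr_sum_self]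
  have hf_dir : f ((q - p).1 • (1 : A) + (q - p).2.1 • e₂ + (q - p).2.2 • e₃) = 0 := by
    simp only [map_add, LinearMap.map_smul_of_tower, hf_one, hf_e₂, hf_e₃, Complex.real_smul,
      Prod.fst_sub, Prod.snd_sub, mul_one]
    rw [hξ, hξ] at hpq
    push_cast
    linear_combination -hpq
  have hseg : segment ℝ p q ⊆ Ω := hconv p hp q hq hpq.symm
  have heq : f (φ q) = f (φ p) := by
    refine eq_of_right_dir_deriv_zero_on_segment (g := fun x => f (φ x))
      (hf_cont.comp_continuousOn (hcont.mono hseg)) fun x hx => ?_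
    obtain ⟨D, hD⟩ := hmono x (hseg hx)
    have hlim := (hf_cont.tendsto _).comp (hD (q - p).1 (q - p).2.1 (q - p).2.2)
    rw [hf_mul, hf_dir, zero_mul] at hlim
    refine hlim.congr fun ε => ?_
    simp only [Function.comp_apply, LinearMap.map_smul_of_tower, map_sub]
  exact ⟨I.mem_span_image_ne_iff_coord_eq_zero.2 (by rw [map_sub, heq, sub_self]), heq.symm⟩

/-- Lemma 4: if `Φ` is monogenic in `Ω_ζ`, `Ω` is convex in the direction of
the straight line `L_u` (the kernel of `(x,y,z) ↦ ξ_u`), and `a_u ∉ ℝ` or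
`b_u ∉ ℝ`, then for `ζ₁, ζ₂ ∈ Ω_ζ` with `ζ₂ − ζ₁` in the direction of `L_u` one
has `Φ(ζ₁) − Φ(ζ₂) ∈ 𝓘_u`; consequently `F_u(ξ_u) := f_u(Φ(ζ))` is
well-defined on `D_u`. -/
theorem difference_in_maximal_ideal (n m : ℕ) (hm : m ≤ n) (A : Type*)
    [NormedCommRing A] [NormedAlgebra ℂ A]
    (I : Module.Basis (Fin n) ℂ A)
    (hidem : ∀ r s : Fin n, r.val < m → s.val < m →
      I r * I s = if r = s then I r else 0)
    (Υ : Fin n → Fin n → Fin n → ℂ)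
    (hnil : ∀ r s : Fin n, m ≤ r.val → m ≤ s.val →
      I r * I s = ∑ k ∈ Finset.univ.filter (fun k : Fin n => max r.val s.val < k.val),
        Υ r s k • I k)
    (u : Fin n → Fin n)
    (hu : ∀ s : Fin n, m ≤ s.val → (u s).val < m)
    (hmul3 : ∀ s : Fin n, m ≤ s.val → ∀ r : Fin n, r.val < m →
      I r * I s = if r = u s then I s else 0)
    (hone : ∑ w ∈ Finset.univ.filter (fun w : Fin n => w.val < m), I w = 1)
    (a b : Fin n → ℂ) (e₂ e₃ : A)
    (he₂ : e₂ = ∑ r, a r • I r) (he₃ : e₃ = ∑ r, b r • I r)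
    (hindep : LinearIndependent ℝ ![(1 : A), e₂, e₃])
    (w : Fin n) (hw : w.val < m)
    (hab : (a w).im ≠ 0 ∨ (b w).im ≠ 0)
    (Ω : Set (ℝ × ℝ × ℝ)) (hΩo : IsOpen Ω) (hΩc : IsConnected Ω)
    (ξ : Fin n → (ℝ × ℝ × ℝ) → ℂ)
    (hξ : ∀ v p, ξ v p = (p.1 : ℂ) + (p.2.1 : ℂ) * a v + (p.2.2 : ℂ) * b v)
    -- `Ω` is convex in the direction of the line `L_u = ker (ξ_u)`
    (hconv : ∀ p ∈ Ω, ∀ q ∈ Ω, ξ w q = ξ w p → segment ℝ p q ⊆ Ω)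
    -- `Φ` is monogenic in `Ω_ζ`
    (φ : ℝ × ℝ × ℝ → A)
    (hcont : ContinuousOn φ Ω)
    (hmono : ∀ p ∈ Ω, ∃ D : A, ∀ h₁ h₂ h₃ : ℝ,
      Tendsto (fun ε : ℝ => ε⁻¹ • (φ (p + ε • (h₁, h₂, h₃)) - φ p))
        (nhdsWithin 0 (Ioi 0))
        (nhds ((h₁ • (1 : A) + h₂ • e₂ + h₃ • e₃) * D))) :
    ∀ p ∈ Ω, ∀ q ∈ Ω, ξ w p = ξ w q →
      (φ p - φ q ∈ Submodule.span ℂ (I '' {k : Fin n | k ≠ w})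
        ∧ I.coord w (φ p) = I.coord w (φ q)) :=
  difference_in_maximal_ideal_general n m A I hidem Υ hnil u hmul3 hone a b e₂ e₃ he₂ he₃ w hw Ω ξ
    hξ hconv φ hcont hmono
end
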